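/- Let M be a connected compact smooth manifold and F, G : M → ℝ² smooth maps with |F(x)| = |G(x)| for all x and |∂F/∂τ(x)| = |∂G/∂τ(x)| for all x ∈ M and all tangent vectors τ ∈ T_x M. Then there exists a nonempty open set V ⊆ M and an orthogonal linear transformation T ∈ O(2) such that F(x) = T G(x) for all x ∈ V. -/

import Mathlib

/-!
Identify `ℝ²` with `ℂ` and work in a chart around a point where `G ≠ 0`. There `F = q G` and
`F = r Ḡ` with `|q| = |r| = 1`. Writing `dF/F = α + iβ` and `dG/G = α + iγ` (equal real parts
since `|F| = |G|`), the hypothesis `|dF| = |dG|` forces `β² = γ²`, i.e.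
`(dq/q)(dr/r) = (iβ - iγ)(iβ + iγ) = 0` in every direction. A product of two linear forms vanishes
only if one of them does, so at each point `dq = 0` or `dr = 0`. Since `dr` is continuous, either
`dq` vanishes on an open set or `dr` vanishes everywhere; hence `q` or `r` is a unimodular
constant `c` near some point, and `T = (z ↦ c z)` or `T = (z ↦ c z̄)`.
-/

open scoped Manifold

section

open Complex ComplexConjugate Set Filter Topology

theorem Complex.mul_sub_mul_mul_conj_mul_sub_mul_eq_zero {u v du dv : ℂ} (h₀ : ‖u‖ = ‖v‖)
    (h₁ : inner ℝ u du = inner ℝ v dv) (h₂ : ‖du‖ = ‖dv‖) :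
    (v * du - u * dv) * (conj v * du - u * conj dv) = 0 := by
  have h₀' : u * conj u = v * conj v := by simp only [mul_conj, normSq_eq_norm_sq, h₀]
  have h₂' : du * conj du = dv * conj dv := by simp only [mul_conj, normSq_eq_norm_sq, h₂]
  have h₁' : conj u * du + u * conj du = conj v * dv + v * conj dv := by
    have := congrArg (fun x : ℝ => (2 * x : ℂ)) h₁
    simp only [Complex.inner, re_eq_add_conj, map_mul, conj_conj] at this
    linear_combination this
  -- the product expands to `|v|² du² - u du (v̄ dv + v dv̄) + u² |dv|²`
  linear_combination (-du ^ 2) * h₀' + (u * du) * h₁' - u ^ 2 * h₂'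

theorem forall_eq_zero_or_forall_eq_zero_of_mul_eq_zero {F M R : Type*} [Add M]
    [NonUnitalNonAssocSemiring R] [NoZeroDivisors R] [FunLike F M R] [AddHomClass F M R]
    {A B : F} (h : ∀ x, A x * B x = 0) : (∀ x, A x = 0) ∨ ∀ x, B x = 0 := by
  by_contra! ⟨⟨x, hx⟩, y, hy⟩
  have hBx : B x = 0 := (mul_eq_zero.1 (h x)).resolve_left hx
  have hAy : A y = 0 := (mul_eq_zero.1 (h y)).resolve_right hy
  have := h (x + y)
  rw [map_add, map_add, hBx, hAy, add_zero, zero_add] at this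
  exact mul_ne_zero hx hy this

theorem exists_isOpen_subset_nonempty_eqOn_zero_or {X Y Z : Type*} [TopologicalSpace X]
    [TopologicalSpace Z] [T1Space Z] [Zero Y] [Zero Z] {s : Set X} (hs : IsOpen s)
    (hne : s.Nonempty) {φ : X → Y} {ψ : X → Z} (hψ : ContinuousOn ψ s)
    (h : ∀ x ∈ s, φ x = 0 ∨ ψ x = 0) :
    ∃ W ⊆ s, IsOpen W ∧ W.Nonempty ∧ (EqOn φ 0 W ∨ EqOn ψ 0 W) := by
  by_cases hψ0 : EqOn ψ 0 s
  · exact ⟨s, subset_rfl, hs, hne, Or.inr hψ0⟩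
  obtain ⟨x, hxs, hx⟩ := not_forall₂.1 hψ0
  exact ⟨s ∩ ψ ⁻¹' {0}ᶜ, inter_subset_left, hψ.isOpen_inter_preimage hs isOpen_compl_singleton,
    ⟨x, hxs, hx⟩, Or.inl fun y hy => (h y hy.1).resolve_right hy.2⟩

variable {E : Type*} [NormedAddCommGroup E] [NormedSpace ℝ E]

theorem inner_fderiv_eq_of_norm_eventuallyEq {F : Type*} [NormedAddCommGroup F]
    [InnerProductSpace ℝ F] {f g : E → F} {p : E} (hf : DifferentiableAt ℝ f p)
    (hg : DifferentiableAt ℝ g p) (h : ∀ᶠ x in 𝓝 p, ‖f x‖ = ‖g x‖) (τ : E) :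
    inner ℝ (f p) (fderiv ℝ f p τ) = inner ℝ (g p) (fderiv ℝ g p τ) := by
  have hsq : (‖f ·‖ ^ 2) =ᶠ[𝓝 p] (‖g ·‖ ^ 2) := h.mono fun x hx => by simp only [hx]
  have := congrArg (· τ) (hf.hasFDerivAt.norm_sq.congr_of_eventuallyEq hsq.symm
    |>.unique hg.hasFDerivAt.norm_sq)
  simpa using this

theorem fderiv_div_eq_zero_of_smul_fderiv_eq {f g : E → ℂ} {p : E} (hf : DifferentiableAt ℝ f p)
    (hg : DifferentiableAt ℝ g p) (hg0 : g p ≠ 0)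
    (h : g p • fderiv ℝ f p = f p • fderiv ℝ g p) : fderiv ℝ (fun x => f x / g x) p = 0 := by
  have hq : DifferentiableAt ℝ (fun x => f x / g x) p := by
    simp_rw [div_eq_mul_inv]; exact hf.mul (hg.inv hg0)
  have hfq : (fun x => f x / g x * g x) =ᶠ[𝓝 p] f :=
    (hg.continuousAt.eventually_ne hg0).mono fun x hx => div_mul_cancel₀ _ hx
  have hprod := fderiv_fun_mul hq hg
  rw [hfq.fderiv_eq] at hprod
  have : g p • g p • fderiv ℝ (fun x => f x / g x) p = 0 := by
    rw [← sub_eq_zero_of_eq h, hprod, smul_add, smul_smul, smul_smul, mul_div_cancel₀ _ hg0]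
    exact (add_sub_cancel_left _ _).symm
  ext τ
  simpa [hg0] using congrArg (· τ) this

theorem fderiv_div_eq_zero_or_fderiv_div_conj_eq_zero {f g : E → ℂ} {p : E}
    (hf : DifferentiableAt ℝ f p) (hg : DifferentiableAt ℝ g p) (hg0 : g p ≠ 0)
    (hnorm : ∀ᶠ x in 𝓝 p, ‖f x‖ = ‖g x‖) (hd : ∀ τ, ‖fderiv ℝ f p τ‖ = ‖fderiv ℝ g p τ‖) :
    fderiv ℝ (fun x => f x / g x) p = 0 ∨ fderiv ℝ (fun x => f x / conj (g x)) p = 0 := by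
  have hg' : DifferentiableAt ℝ (fun x => conj (g x)) p := hg.star
  have hdg' : ∀ τ, fderiv ℝ (fun x => conj (g x)) p τ = conj (fderiv ℝ g p τ) := fun τ => by
    change fderiv ℝ (fun x => star (g x)) p τ = _
    rw [fderiv_star]
    rfl
  have hprod : ∀ τ, (g p • fderiv ℝ f p - f p • fderiv ℝ g p) τ *
      (conj (g p) • fderiv ℝ f p - f p • fderiv ℝ (fun x => conj (g x)) p) τ = 0 := fun τ => by
    simpa [hdg'] using Complex.mul_sub_mul_mul_conj_mul_sub_mul_eq_zero hnorm.self_of_nhds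
      (inner_fderiv_eq_of_norm_eventuallyEq hf hg hnorm τ) (hd τ)
  refine (forall_eq_zero_or_forall_eq_zero_of_mul_eq_zero hprod).imp (fun h => ?_) fun h => ?_
  · exact fderiv_div_eq_zero_of_smul_fderiv_eq hf hg hg0 (sub_eq_zero.1 (ContinuousLinearMap.ext h))
  · exact fderiv_div_eq_zero_of_smul_fderiv_eq hf hg' (by simpa using hg0)
      (sub_eq_zero.1 (ContinuousLinearMap.ext h))

theorem exists_isOpen_subset_eq_circle_mul {f h : E → ℂ} {W : Set E} (hW : IsOpen W)
    (hne : W.Nonempty) (hf : DifferentiableOn ℝ f W) (hh : DifferentiableOn ℝ h W)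
    (hh0 : ∀ x ∈ W, h x ≠ 0) (hnorm : ∀ x ∈ W, ‖f x‖ = ‖h x‖)
    (hd : EqOn (fderiv ℝ (fun x => f x / h x)) 0 W) :
    ∃ V ⊆ W, IsOpen V ∧ V.Nonempty ∧ ∃ c : Circle, ∀ x ∈ V, f x = c * h x := by
  obtain ⟨w, hw⟩ := hne
  have hq : DifferentiableOn ℝ (fun x => f x / h x) W := by
    simp_rw [div_eq_mul_inv]; exact hf.mul (hh.inv hh0)
  have hc : ‖f w / h w‖ = 1 := by
    rw [norm_div, hnorm w hw, div_self (norm_ne_zero_iff.2 (hh0 w hw))]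
  refine ⟨W ∩ (fun x => f x / h x) ⁻¹' {f w / h w}, inter_subset_left,
    hW.isOpen_inter_preimage_of_fderiv_eq_zero hq hd _, ⟨w, hw, rfl⟩,
    ⟨f w / h w, mem_sphere_zero_iff_norm.2 hc⟩, fun x hx => ?_⟩
  change f x = f w / h w * h x
  rw [← hx.2]
  exact (div_mul_cancel₀ _ (hh0 x hx.1)).symm

theorem Complex.exists_isOpen_subset_eq_linearIsometryEquiv_apply {f g : E → ℂ} {s : Set E}
    {x₀ : E} (hs : IsOpen s) (hf : ContDiffOn ℝ 1 f s) (hg : ContDiffOn ℝ 1 g s)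
    (hnorm : ∀ x ∈ s, ‖f x‖ = ‖g x‖) (hd : ∀ x ∈ s, ∀ τ, ‖fderiv ℝ f x τ‖ = ‖fderiv ℝ g x τ‖)
    (hx₀ : x₀ ∈ s) (hg0 : g x₀ ≠ 0) :
    ∃ V ⊆ s, IsOpen V ∧ V.Nonempty ∧ ∃ T : ℂ ≃ₗᵢ[ℝ] ℂ, ∀ x ∈ V, f x = T (g x) := by
  set s' := s ∩ g ⁻¹' {0}ᶜ
  have hs' : IsOpen s' := hg.continuousOn.isOpen_inter_preimage hs isOpen_compl_singleton
  have hs's : s' ⊆ s := inter_subset_left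
  have hgc : ContDiffOn ℝ 1 (fun x => conj (g x)) s :=
    conjCLE.toContinuousLinearMap.contDiff.comp_contDiffOn hg
  have hgc0 : ∀ x ∈ s', conj (g x) ≠ 0 := fun x hx => by simpa using hx.2
  have hdiff : ∀ {u : E → ℂ}, ContDiffOn ℝ 1 u s → DifferentiableOn ℝ u s' :=
    fun hu => (hu.differentiableOn one_ne_zero).mono hs's
  have hr : ContDiffOn ℝ 1 (fun x => f x / conj (g x)) s' := by
    simp_rw [div_eq_mul_inv]; exact (hf.mono hs's).mul ((hgc.mono hs's).inv hgc0)
  obtain ⟨W, hWs', hW, hWne, hq0 | hr0⟩ := exists_isOpen_subset_nonempty_eqOn_zero_or hs'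
    ⟨x₀, hx₀, hg0⟩ (hr.continuousOn_fderiv_of_isOpen hs' le_rfl) fun x hx =>
      fderiv_div_eq_zero_or_fderiv_div_conj_eq_zero
        ((hdiff hf).differentiableAt (hs'.mem_nhds hx)) ((hdiff hg).differentiableAt
          (hs'.mem_nhds hx)) hx.2 (eventually_of_mem (hs.mem_nhds hx.1) hnorm) (hd x hx.1)
  · obtain ⟨V, hVW, hV, hVne, c, hc⟩ := exists_isOpen_subset_eq_circle_mul hW hWne
      ((hdiff hf).mono hWs') ((hdiff hg).mono hWs') (fun x hx => (hWs' hx).2)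
      (fun x hx => hnorm x (hs's (hWs' hx))) hq0
    exact ⟨V, hVW.trans (hWs'.trans hs's), hV, hVne, rotation c, fun x hx => hc x hx⟩
  · obtain ⟨V, hVW, hV, hVne, c, hc⟩ := exists_isOpen_subset_eq_circle_mul hW hWne
      ((hdiff hf).mono hWs') ((hdiff hgc).mono hWs') (fun x hx => hgc0 x (hWs' hx))
      (fun x hx => by rw [norm_conj]; exact hnorm x (hs's (hWs' hx))) hr0
    exact ⟨V, hVW.trans (hWs'.trans hs's), hV, hVne, conjLIE.trans (rotation c),
      fun x hx => hc x hx⟩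

theorem exists_isOpen_subset_eq_linearIsometryEquiv_apply {F : Type*} [NormedAddCommGroup F]
    [NormedSpace ℝ F] (e : F ≃ₗᵢ[ℝ] ℂ) {f g : E → F} {s : Set E} {x₀ : E} (hs : IsOpen s)
    (hf : ContDiffOn ℝ 1 f s) (hg : ContDiffOn ℝ 1 g s) (hnorm : ∀ x ∈ s, ‖f x‖ = ‖g x‖)
    (hd : ∀ x ∈ s, ∀ τ, ‖fderiv ℝ f x τ‖ = ‖fderiv ℝ g x τ‖) (hx₀ : x₀ ∈ s) (hg0 : g x₀ ≠ 0) :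
    ∃ V ⊆ s, IsOpen V ∧ V.Nonempty ∧ ∃ T : F ≃ₗᵢ[ℝ] F, ∀ x ∈ V, f x = T (g x) := by
  obtain ⟨V, hVs, hV, hVne, T, hT⟩ :=
    Complex.exists_isOpen_subset_eq_linearIsometryEquiv_apply (f := e ∘ f) (g := e ∘ g) hs
      (e.toContinuousLinearEquiv.comp_contDiffOn_iff.2 hf)
      (e.toContinuousLinearEquiv.comp_contDiffOn_iff.2 hg) (fun x hx => by simpa using hnorm x hx)
      (fun x hx τ => by simpa [e.comp_fderiv] using hd x hx τ) hx₀ (by simpa using hg0)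
  refine ⟨V, hVs, hV, hVne, e.trans (T.trans e.symm), fun x hx => ?_⟩
  simpa using congrArg e.symm (hT x hx)

theorem contDiffOn_comp_chartAt_symm {M F : Type*} [TopologicalSpace M] [ChartedSpace E M]
    [IsManifold 𝓘(ℝ, E) 1 M] [NormedAddCommGroup F] [NormedSpace ℝ F] {f : M → F}
    (hf : ContMDiff 𝓘(ℝ, E) 𝓘(ℝ, F) 1 f) (x₀ : M) :
    ContDiffOn ℝ 1 (f ∘ (chartAt E x₀).symm) (chartAt E x₀).target :=
  (hf.comp_contMDiffOn contMDiffOn_chart_symm).contDiffOn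

theorem fderiv_comp_chartAt_symm {M F : Type*} [TopologicalSpace M] [ChartedSpace E M]
    [IsManifold 𝓘(ℝ, E) 1 M] [NormedAddCommGroup F] [NormedSpace ℝ F] {f : M → F}
    (hf : MDifferentiable 𝓘(ℝ, E) 𝓘(ℝ, F) f) {x₀ : M} {p : E} (hp : p ∈ (chartAt E x₀).target) :
    fderiv ℝ (f ∘ (chartAt E x₀).symm) p = (mfderiv 𝓘(ℝ, E) 𝓘(ℝ, F) f ((chartAt E x₀).symm p)).comp
      (mfderiv 𝓘(ℝ, E) 𝓘(ℝ, E) (chartAt E x₀).symm p) := by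
  rw [← mfderiv_eq_fderiv]
  exact mfderiv_comp p (hf _) (mdifferentiableAt_atlas_symm (chart_mem_atlas E x₀) hp)

theorem exists_isOpen_eq_linearIsometryEquiv_apply_of_ne_zero {M F : Type*}
    [TopologicalSpace M] [ChartedSpace E M] [IsManifold 𝓘(ℝ, E) 1 M] [NormedAddCommGroup F]
    [NormedSpace ℝ F] (e : F ≃ₗᵢ[ℝ] ℂ) {f g : M → F} (hf : ContMDiff 𝓘(ℝ, E) 𝓘(ℝ, F) 1 f)
    (hg : ContMDiff 𝓘(ℝ, E) 𝓘(ℝ, F) 1 g) (hnorm : ∀ x, ‖f x‖ = ‖g x‖)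
    (hd : ∀ x τ, ‖(show F from mfderiv 𝓘(ℝ, E) 𝓘(ℝ, F) f x τ)‖ =
      ‖(show F from mfderiv 𝓘(ℝ, E) 𝓘(ℝ, F) g x τ)‖) {x₀ : M} (hx₀ : g x₀ ≠ 0) :
    ∃ V : Set M, IsOpen V ∧ V.Nonempty ∧ ∃ T : F ≃ₗᵢ[ℝ] F, ∀ x ∈ V, f x = T (g x) := by
  obtain ⟨W, hWs, hW, ⟨w, hw⟩, T, hT⟩ := exists_isOpen_subset_eq_linearIsometryEquiv_apply e
    (chartAt E x₀).open_target (contDiffOn_comp_chartAt_symm hf x₀)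
    (contDiffOn_comp_chartAt_symm hg x₀) (fun p _ => hnorm _) (fun p hp τ => by
      rw [fderiv_comp_chartAt_symm (hf.mdifferentiable one_ne_zero) hp,
        fderiv_comp_chartAt_symm (hg.mdifferentiable one_ne_zero) hp]
      exact hd _ _) (mem_chart_target E x₀) (by simpa using hx₀)
  set φ := chartAt E x₀
  refine ⟨φ.source ∩ φ ⁻¹' W, φ.isOpen_inter_preimage hW,
    ⟨φ.symm w, φ.map_target (hWs hw), by simpa [φ.right_inv (hWs hw)]⟩, T, fun x hx => ?_⟩
  simpa only [Function.comp_apply, φ.left_inv hx.1] using hT (φ x) hx.2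

end

theorem stmt1_general {m : ℕ} {M : Type*} [TopologicalSpace M]
    [ChartedSpace (EuclideanSpace ℝ (Fin m)) M]
    [IsManifold (𝓡 m) (⊤ : ℕ∞) M] [ConnectedSpace M]
    (F G : M → EuclideanSpace ℝ (Fin 2))
    (hF : ContMDiff (𝓡 m) 𝓘(ℝ, EuclideanSpace ℝ (Fin 2)) (⊤ : ℕ∞) F)
    (hG : ContMDiff (𝓡 m) 𝓘(ℝ, EuclideanSpace ℝ (Fin 2)) (⊤ : ℕ∞) G)
    (hnorm : ∀ x, ‖F x‖ = ‖G x‖)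
    (hderiv : ∀ (x : M) (τ : TangentSpace (𝓡 m) x),
      ‖(show EuclideanSpace ℝ (Fin 2) from mfderiv (𝓡 m) 𝓘(ℝ, EuclideanSpace ℝ (Fin 2)) F x τ)‖ =
      ‖(show EuclideanSpace ℝ (Fin 2) from mfderiv (𝓡 m) 𝓘(ℝ, EuclideanSpace ℝ (Fin 2)) G x τ)‖) :
    ∃ V : Set M, IsOpen V ∧ V.Nonempty ∧
      ∃ T : EuclideanSpace ℝ (Fin 2) ≃ₗᵢ[ℝ] EuclideanSpace ℝ (Fin 2),
        ∀ x ∈ V, F x = T (G x) := by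
  by_cases hG0 : ∀ x, G x = 0
  · refine ⟨Set.univ, isOpen_univ, Set.univ_nonempty, LinearIsometryEquiv.refl ℝ _, fun x _ => ?_⟩
    rw [hG0 x, map_zero, ← norm_eq_zero, hnorm x, hG0 x, norm_zero]
  obtain ⟨x₀, hx₀⟩ := not_forall.1 hG0
  exact exists_isOpen_eq_linearIsometryEquiv_apply_of_ne_zero
    Complex.orthonormalBasisOneI.repr.symm (hF.of_le (by norm_cast)) (hG.of_le (by norm_cast))
    hnorm hderiv hx₀

/-- If `F, G : M → ℝ²` are smooth maps on a connected compact smooth manifold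
with `|F(x)| = |G(x)|` everywhere and `|dF_x(τ)| = |dG_x(τ)|` for all tangent vectors `τ`, then
there is a nonempty open set `V ⊆ M` and an orthogonal transformation `T ∈ O(2)` with
`F = T ∘ G` on `V`. -/
theorem stmt1 {m : ℕ} {M : Type*} [TopologicalSpace M]
    [ChartedSpace (EuclideanSpace ℝ (Fin m)) M]
    [IsManifold (𝓡 m) (⊤ : ℕ∞) M] [CompactSpace M] [ConnectedSpace M]
    (F G : M → EuclideanSpace ℝ (Fin 2))
    (hF : ContMDiff (𝓡 m) 𝓘(ℝ, EuclideanSpace ℝ (Fin 2)) (⊤ : ℕ∞) F)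
    (hG : ContMDiff (𝓡 m) 𝓘(ℝ, EuclideanSpace ℝ (Fin 2)) (⊤ : ℕ∞) G)
    (hnorm : ∀ x, ‖F x‖ = ‖G x‖)
    (hderiv : ∀ (x : M) (τ : TangentSpace (𝓡 m) x),
      ‖(show EuclideanSpace ℝ (Fin 2) from mfderiv (𝓡 m) 𝓘(ℝ, EuclideanSpace ℝ (Fin 2)) F x τ)‖ =
      ‖(show EuclideanSpace ℝ (Fin 2) from mfderiv (𝓡 m) 𝓘(ℝ, EuclideanSpace ℝ (Fin 2)) G x τ)‖) :
    ∃ V : Set M, IsOpen V ∧ V.Nonempty ∧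
      ∃ T : EuclideanSpace ℝ (Fin 2) ≃ₗᵢ[ℝ] EuclideanSpace ℝ (Fin 2),
        ∀ x ∈ V, F x = T (G x) :=
  stmt1_general F G hF hG hnorm hderiv
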